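/- arXiv:1712.06392 — 2 statements merged into one kernel-verified Lean document; each statement's English description precedes it below -/
import Mathlib

section
/- Let jG ⊆ K[x1,…,x7] be the monomial ideal generated by x7², x7x6, x7x5, x7x4, x7x3, x7x2, x7x1, x6², x6x5, x6x4, x6x3, x6x2, x6x1, x5², x5x4, x5x3, x5x2, x5x1, x4², x4x3, x4x2, x4x1², x3³, x3²x2, x3²x1, x3x2², x3x2x1, x3x1², x2³, x2²x1, x2x1², x1⁴ (over any field K). Then: (i) jG is strongly stable; and (ii) jG is an affine 3-segment with respect to the weight vector ω given by ω(x1)=4, ω(x2)=5, ω(x3)=6, ω(x4)=8, ω(x5)=9, ω(x6)=10, ω(x7)=11, i.e. for every monomial x^α in the listed minimal generating set of jG and every monomial x^γ ∉ jG with total degree |γ| ≤ max(3, |α|), one has ω-deg(x^α) > ω-deg(x^γ), where ω-deg(x^β) = Σ_i ω(x_i)·β_i. -/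
open MvPolynomial

/-- A monomial ideal `J` is strongly stable if, for every monomial `xᵅ ∈ J` and indices
`i < k` with `x_i ∣ xᵅ`, the monomial `(xᵅ / x_i) · x_k` also lies in `J`. -/
def StronglyStable {n : ℕ} {K : Type} [Field K] (J : Ideal (MvPolynomial (Fin n) K)) : Prop :=
  ∀ α : Fin n →₀ ℕ, (monomial α (1 : K)) ∈ J →
    ∀ i k : Fin n, i < k → α i ≠ 0 →
      (monomial (α - Finsupp.single i 1 + Finsupp.single k 1) (1 : K)) ∈ J

/-- The `ω`-degree of a monomial exponent `β`, i.e. `Σ_i ω(x_i)·β_i`. -/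
def wdeg {n : ℕ} (ω : Fin n → ℕ) (β : Fin n →₀ ℕ) : ℕ :=
  β.sum fun i e => ω i * e

/-- The minimal monomial generators of `jG ⊆ K[x₁,…,x₇]` as exponent vectors
(`x_i` corresponds to index `i - 1`):
`x₇², x₇x₆, x₇x₅, x₇x₄, x₇x₃, x₇x₂, x₇x₁, x₆², x₆x₅, x₆x₄, x₆x₃, x₆x₂, x₆x₁, x₅², x₅x₄,
x₅x₃, x₅x₂, x₅x₁, x₄², x₄x₃, x₄x₂, x₄x₁², x₃³, x₃²x₂, x₃²x₁, x₃x₂², x₃x₂x₁, x₃x₁², x₂³,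
x₂²x₁, x₂x₁², x₁⁴`. -/
noncomputable def jGGens7 : List (Fin 7 →₀ ℕ) :=
  [Finsupp.single 6 2, Finsupp.single 6 1 + Finsupp.single 5 1,
   Finsupp.single 6 1 + Finsupp.single 4 1, Finsupp.single 6 1 + Finsupp.single 3 1,
   Finsupp.single 6 1 + Finsupp.single 2 1, Finsupp.single 6 1 + Finsupp.single 1 1,
   Finsupp.single 6 1 + Finsupp.single 0 1, Finsupp.single 5 2,
   Finsupp.single 5 1 + Finsupp.single 4 1, Finsupp.single 5 1 + Finsupp.single 3 1,
   Finsupp.single 5 1 + Finsupp.single 2 1, Finsupp.single 5 1 + Finsupp.single 1 1,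
   Finsupp.single 5 1 + Finsupp.single 0 1, Finsupp.single 4 2,
   Finsupp.single 4 1 + Finsupp.single 3 1, Finsupp.single 4 1 + Finsupp.single 2 1,
   Finsupp.single 4 1 + Finsupp.single 1 1, Finsupp.single 4 1 + Finsupp.single 0 1,
   Finsupp.single 3 2, Finsupp.single 3 1 + Finsupp.single 2 1,
   Finsupp.single 3 1 + Finsupp.single 1 1, Finsupp.single 3 1 + Finsupp.single 0 2,
   Finsupp.single 2 3, Finsupp.single 2 2 + Finsupp.single 1 1,
   Finsupp.single 2 2 + Finsupp.single 0 1, Finsupp.single 2 1 + Finsupp.single 1 2,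
   Finsupp.single 2 1 + Finsupp.single 1 1 + Finsupp.single 0 1,
   Finsupp.single 2 1 + Finsupp.single 0 2, Finsupp.single 1 3,
   Finsupp.single 1 2 + Finsupp.single 0 1, Finsupp.single 1 1 + Finsupp.single 0 2,
   Finsupp.single 0 4]

/-- The monomial ideal `jG ⊆ K[x₁,…,x₇]`. -/
noncomputable def jG7 (K : Type) [Field K] : Ideal (MvPolynomial (Fin 7) K) :=
  Ideal.span ((fun α => monomial α (1 : K)) '' {α | α ∈ jGGens7})

/-! Strong stability only has to be checked on the generators: if `g ∣ xᵅ` and `x_i ∤ g`, then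
already `g ∣ xᵅ x_k / x_i`. For the segment property, every generator has degree at most `4` and
`ω`-degree at least `13`, while every monomial of degree at most `4` outside `jG` has `ω`-degree at
most `12` (attained by `x₃²`, `x₄x₁` and `x₁³`). The checks on the generators and on the
monomials of degree at most `4` are finite and are evaluated by the kernel. -/

namespace MvPolynomial

theorem monomial_one_mem_ideal_span_monomial_image_iff {σ R : Type*} [CommSemiring R]
    [Nontrivial R] {s : Set (σ →₀ ℕ)} {γ : σ →₀ ℕ} :
    monomial γ (1 : R) ∈ Ideal.span ((fun s => monomial s (1 : R)) '' s) ↔ ∃ g ∈ s, g ≤ γ := by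
  classical
  rw [mem_ideal_span_monomial_image, support_monomial, if_neg one_ne_zero]
  simp

end MvPolynomial

theorem Finsupp.le_tsub_single_add_single {σ : Type*} [DecidableEq σ] {g α : σ →₀ ℕ} {i : σ}
    (hle : g ≤ α) (hgi : g i = 0) (k : σ) : g ≤ α - single i 1 + single k 1 := by
  intro j
  have := hle j
  simp only [coe_add, coe_tsub, Pi.add_apply, Pi.sub_apply, single_apply]
  split_ifs <;> grind

theorem stronglyStable_span_monomial_image {n : ℕ} {K : Type} [Field K] {s : Set (Fin n →₀ ℕ)}
    (hs : ∀ g ∈ s, ∀ i k : Fin n, i < k → g i ≠ 0 →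
      ∃ g' ∈ s, g' ≤ g - Finsupp.single i 1 + Finsupp.single k 1) :
    StronglyStable (Ideal.span ((fun α => monomial α (1 : K)) '' s)) := by
  intro α hα i k hik _
  rw [monomial_one_mem_ideal_span_monomial_image_iff] at hα ⊢
  obtain ⟨g, hg, hgα⟩ := hα
  by_cases hgi : g i = 0
  · exact ⟨g, hg, Finsupp.le_tsub_single_add_single hgα hgi k⟩
  · obtain ⟨g', hg', hg'g⟩ := hs g hg i k hik hgi
    exact ⟨g', hg', hg'g.trans (by gcongr)⟩

theorem wdeg_eq_sum {n : ℕ} (ω : Fin n → ℕ) (β : Fin n →₀ ℕ) : wdeg ω β = ∑ i, ω i * β i :=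
  Finsupp.sum_fintype _ _ fun _ => mul_zero _

local notation "ω₇" => (![4, 5, 6, 8, 9, 10, 11] : Fin 7 → ℕ)

/-- `jGGens7` as plain functions, on which `decide` can compute. -/
def jGGens7Fun : List (Fin 7 → ℕ) :=
  [![0,0,0,0,0,0,2], ![0,0,0,0,0,1,1], ![0,0,0,0,1,0,1], ![0,0,0,1,0,0,1],
   ![0,0,1,0,0,0,1], ![0,1,0,0,0,0,1], ![1,0,0,0,0,0,1], ![0,0,0,0,0,2,0],
   ![0,0,0,0,1,1,0], ![0,0,0,1,0,1,0], ![0,0,1,0,0,1,0], ![0,1,0,0,0,1,0],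
   ![1,0,0,0,0,1,0], ![0,0,0,0,2,0,0], ![0,0,0,1,1,0,0], ![0,0,1,0,1,0,0],
   ![0,1,0,0,1,0,0], ![1,0,0,0,1,0,0], ![0,0,0,2,0,0,0], ![0,0,1,1,0,0,0],
   ![0,1,0,1,0,0,0], ![2,0,0,1,0,0,0], ![0,0,3,0,0,0,0], ![0,1,2,0,0,0,0],
   ![1,0,2,0,0,0,0], ![0,2,1,0,0,0,0], ![1,1,1,0,0,0,0], ![2,0,1,0,0,0,0],
   ![0,3,0,0,0,0,0], ![1,2,0,0,0,0,0], ![2,1,0,0,0,0,0], ![4,0,0,0,0,0,0]]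

theorem map_coe_jGGens7 : jGGens7.map (⇑) = jGGens7Fun := by
  simp only [jGGens7, jGGens7Fun, List.map_cons, List.map_nil, List.cons.injEq, and_true]
  and_intros <;> funext j <;> fin_cases j <;> simp

theorem jGGens7Fun_exchange : ∀ f ∈ jGGens7Fun, ∀ i k : Fin 7, i < k → f i ≠ 0 →
    ∃ f' ∈ jGGens7Fun, ∀ j,
      f' j ≤ f j - (Pi.single i 1 : Fin 7 → ℕ) j + (Pi.single k 1 : Fin 7 → ℕ) j := by
  decide +kernel

theorem jGGens7Fun_degree_le_and_wdeg_ge :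
    ∀ f ∈ jGGens7Fun, ∑ j, f j ≤ 4 ∧ 13 ≤ ∑ j, ω₇ j * f j := by
  decide +kernel

theorem wdeg_le_of_not_ge_jGGens7Fun : ∀ n ≤ 4, ∀ c ∈ Finset.Nat.antidiagonalTuple 7 n,
    (∀ f ∈ jGGens7Fun, ¬ ∀ j, f j ≤ c j) → ∑ j, ω₇ j * c j ≤ 12 := by
  decide +kernel

theorem mem_jGGens7Fun_iff {f : Fin 7 → ℕ} : f ∈ jGGens7Fun ↔ ∃ g ∈ jGGens7, ⇑g = f := by
  rw [← map_coe_jGGens7, List.mem_map]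

theorem jGGens7_exchange {g : Fin 7 →₀ ℕ} (hg : g ∈ jGGens7) {i k : Fin 7} (hik : i < k)
    (hgi : g i ≠ 0) : ∃ g' ∈ jGGens7, g' ≤ g - Finsupp.single i 1 + Finsupp.single k 1 := by
  obtain ⟨f', hf', hle⟩ := jGGens7Fun_exchange g (mem_jGGens7Fun_iff.2 ⟨g, hg, rfl⟩) i k hik hgi
  obtain ⟨g', hg', rfl⟩ := mem_jGGens7Fun_iff.1 hf'
  exact ⟨g', hg', fun j => by simpa [Finsupp.single_eq_pi_single] using hle j⟩

theorem jGGens7_degree_le_and_wdeg_ge {g : Fin 7 →₀ ℕ} (hg : g ∈ jGGens7) :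
    ∑ j, g j ≤ 4 ∧ 13 ≤ wdeg ω₇ g := by
  rw [wdeg_eq_sum]
  exact jGGens7Fun_degree_le_and_wdeg_ge g (mem_jGGens7Fun_iff.2 ⟨g, hg, rfl⟩)

theorem wdeg_le_of_monomial_not_mem_jG7 {K : Type} [Field K] {γ : Fin 7 →₀ ℕ}
    (hγ : monomial γ (1 : K) ∉ jG7 K) (hdeg : ∑ j, γ j ≤ 4) : wdeg ω₇ γ ≤ 12 := by
  rw [wdeg_eq_sum]
  refine wdeg_le_of_not_ge_jGGens7Fun _ hdeg γ (Finset.Nat.mem_antidiagonalTuple.2 rfl) ?_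
  intro f hf hfγ
  obtain ⟨g, hg, rfl⟩ := mem_jGGens7Fun_iff.1 hf
  exact hγ (monomial_one_mem_ideal_span_monomial_image_iff.2 ⟨g, hg, hfγ⟩)

/-- `jG ⊆ K[x₁,…,x₇]` is strongly stable, and it is an affine `3`-segment for the weight
vector `ω = (4, 5, 6, 8, 9, 10, 11)` (on `x₁, …, x₇`). -/
theorem jG7_stronglyStable_and_segment (K : Type) [Field K] :
    StronglyStable (jG7 K) ∧
    (∀ α ∈ jGGens7, ∀ γ : Fin 7 →₀ ℕ,
      (monomial γ (1 : K)) ∉ jG7 K →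
      (γ.sum fun _ e => e) ≤ max 3 (α.sum fun _ e => e) →
      wdeg ![4, 5, 6, 8, 9, 10, 11] γ < wdeg ![4, 5, 6, 8, 9, 10, 11] α) := by
  refine ⟨stronglyStable_span_monomial_image fun g hg _ _ => jGGens7_exchange hg,
    fun α hα γ hγ hdeg => ?_⟩
  have degree_eq_sum (β : Fin 7 →₀ ℕ) : (β.sum fun _ e => e) = ∑ j, β j :=
    Finsupp.sum_fintype _ _ fun _ => rfl
  obtain ⟨hα4, hα13⟩ := jGGens7_degree_le_and_wdeg_ge hα
  rw [degree_eq_sum, degree_eq_sum] at hdeg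
  have hγ12 := wdeg_le_of_monomial_not_mem_jG7 hγ (by omega)
  omega
end

section
/- Let jG ⊆ K[x1,…,x5] be the monomial ideal generated by x5², x4x5, x3x5, x2x5, x1x5, x4², x3x4, x2x4, x1x4, x3², x2²x3, x1x2x3, x1²x3, x2³, x1x2², x1²x2, x1⁴ (over any field K). Then: (i) jG is strongly stable; and (ii) jG is an affine 3-segment with respect to the weight vector ω given by ω(x1)=3, ω(x2)=4, ω(x3)=5, ω(x4)=7, ω(x5)=8, i.e. for every monomial x^α in the listed minimal generating set of jG and every monomial x^γ ∉ jG with total degree |γ| ≤ max(3, |α|), one has ω-deg(x^α) > ω-deg(x^γ), where ω-deg(x^β) = Σ_i ω(x_i)·β_i. -/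
open MvPolynomial

/-- The minimal monomial generators of `jG ⊆ K[x₁,…,x₅]` as exponent vectors
(`x_i` corresponds to index `i - 1`):
`x₅², x₄x₅, x₃x₅, x₂x₅, x₁x₅, x₄², x₃x₄, x₂x₄, x₁x₄, x₃², x₂²x₃, x₁x₂x₃, x₁²x₃, x₂³,
x₁x₂², x₁²x₂, x₁⁴`. -/
noncomputable def jGGens5 : List (Fin 5 →₀ ℕ) :=
  [Finsupp.single 4 2, Finsupp.single 4 1 + Finsupp.single 3 1,
   Finsupp.single 4 1 + Finsupp.single 2 1, Finsupp.single 4 1 + Finsupp.single 1 1,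
   Finsupp.single 4 1 + Finsupp.single 0 1, Finsupp.single 3 2,
   Finsupp.single 3 1 + Finsupp.single 2 1, Finsupp.single 3 1 + Finsupp.single 1 1,
   Finsupp.single 3 1 + Finsupp.single 0 1, Finsupp.single 2 2,
   Finsupp.single 2 1 + Finsupp.single 1 2,
   Finsupp.single 2 1 + Finsupp.single 1 1 + Finsupp.single 0 1,
   Finsupp.single 2 1 + Finsupp.single 0 2, Finsupp.single 1 3,
   Finsupp.single 1 2 + Finsupp.single 0 1, Finsupp.single 1 1 + Finsupp.single 0 2,
   Finsupp.single 0 4]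

/-- The monomial ideal `jG ⊆ K[x₁,…,x₅]`. -/
noncomputable def jG5 (K : Type) [Field K] : Ideal (MvPolynomial (Fin 5) K) :=
  Ideal.span ((fun α => monomial α (1 : K)) '' {α | α ∈ jGGens5})

/-!
Divisibility of `xᵞ` by one of the seventeen generators is a Presburger condition on the
exponents of `γ`, so closure under each of the ten moves `xᵢ ↦ x_k` (`i < k`) is a
linear-arithmetic fact. The same condition shows that the monomials outside `jG` are
`1, x₁, …, x₅, x₁², x₁x₂, x₂², x₁x₃, x₂x₃, x₁³`, all of `ω`-degree at most `9`, while every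
generator has `ω`-degree at least `10`.
-/

theorem monomial_one_mem_span_monomial_image_iff {σ R : Type*} [CommSemiring R] [Nontrivial R]
    (S : Set (σ →₀ ℕ)) (γ : σ →₀ ℕ) :
    monomial γ (1 : R) ∈ Ideal.span ((fun α => monomial α 1) '' S) ↔ ∃ g ∈ S, g ≤ γ := by
  classical
  simp [mem_ideal_span_monomial_image, support_monomial]

/-- One disjunct per generator `x₁ᵃ x₂ᵇ x₃ᶜ x₄ᵈ x₅ᵉ` of `jGGens5`, in the same order. -/
def InJG5 (a b c d e : ℕ) : Prop :=
  2 ≤ e ∨ (1 ≤ d ∧ 1 ≤ e) ∨ (1 ≤ c ∧ 1 ≤ e) ∨ (1 ≤ b ∧ 1 ≤ e) ∨ (1 ≤ a ∧ 1 ≤ e) ∨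
  2 ≤ d ∨ (1 ≤ c ∧ 1 ≤ d) ∨ (1 ≤ b ∧ 1 ≤ d) ∨ (1 ≤ a ∧ 1 ≤ d) ∨
  2 ≤ c ∨ (2 ≤ b ∧ 1 ≤ c) ∨ (1 ≤ a ∧ 1 ≤ b ∧ 1 ≤ c) ∨ (2 ≤ a ∧ 1 ≤ c) ∨
  3 ≤ b ∨ (1 ≤ a ∧ 2 ≤ b) ∨ (2 ≤ a ∧ 1 ≤ b) ∨ 4 ≤ a

theorem monomial_mem_jG5_iff {K : Type} [Field K] (γ : Fin 5 →₀ ℕ) :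
    monomial γ (1 : K) ∈ jG5 K ↔ InJG5 (γ 0) (γ 1) (γ 2) (γ 3) (γ 4) := by
  simp only [jG5, monomial_one_mem_span_monomial_image_iff, Set.mem_ofPred_eq, jGGens5,
    List.mem_cons, List.not_mem_nil, or_false, exists_eq_or_imp, exists_eq_left,
    Finsupp.le_def, Fin.forall_fin_succ]
  simp [Finsupp.single_apply, InJG5]

theorem stronglyStable_jG5 (K : Type) [Field K] : StronglyStable (jG5 K) := by
  intro α hα i k hik hαi
  rw [monomial_mem_jG5_iff, InJG5] at hα ⊢
  fin_cases i <;> fin_cases k <;>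
    simp only [Fin.reduceFinMk, Fin.zero_eta, Fin.mk_one, Fin.isValue, Fin.reduceLT, Fin.reduceEq,
      lt_self_iff_false, not_lt_zero, Fin.lt_one_iff, ne_eq, Finsupp.coe_add, Finsupp.coe_tsub,
      Pi.add_apply, Pi.sub_apply, not_false_eq_true, Finsupp.single_eq_of_ne,
      Finsupp.single_eq_same, tsub_zero, add_zero] at hik hαi ⊢ <;>
    casesm* _ ∨ _ <;> omega

theorem wdeg_le_nine_of_not_mem_jG5 {K : Type} [Field K] (γ : Fin 5 →₀ ℕ)
    (hγ : monomial γ (1 : K) ∉ jG5 K) : wdeg ![3, 4, 5, 7, 8] γ ≤ 9 := by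
  rw [monomial_mem_jG5_iff, InJG5] at hγ
  simp only [wdeg_eq_sum, Fin.sum_univ_five, Matrix.cons_val_zero, Matrix.cons_val_one,
    Matrix.cons_val]
  omega

theorem ten_le_wdeg_of_mem_jGGens5 {α : Fin 5 →₀ ℕ} (hα : α ∈ jGGens5) :
    10 ≤ wdeg ![3, 4, 5, 7, 8] α := by
  revert α
  simp [jGGens5, wdeg_eq_sum, Fin.sum_univ_five]

/-- `jG ⊆ K[x₁,…,x₅]` is strongly stable, and it is an affine `3`-segment for the weight
vector `ω = (3, 4, 5, 7, 8)` (on `x₁, …, x₅`). -/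
theorem jG5_stronglyStable_and_segment (K : Type) [Field K] :
    StronglyStable (jG5 K) ∧
    (∀ α ∈ jGGens5, ∀ γ : Fin 5 →₀ ℕ,
      (monomial γ (1 : K)) ∉ jG5 K →
      (γ.sum fun _ e => e) ≤ max 3 (α.sum fun _ e => e) →
      wdeg ![3, 4, 5, 7, 8] γ < wdeg ![3, 4, 5, 7, 8] α) :=
  ⟨stronglyStable_jG5 K, fun _ hα γ hγ _ =>
    (wdeg_le_nine_of_not_mem_jG5 γ hγ).trans_lt (ten_le_wdeg_of_mem_jGGens5 hα)⟩
end
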